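/- Let n ≥ 3, A a unital semi-prime Banach algebra with the inner derivation property, and Δ a 2-local derivation on M_n(A) vanishing on the span of the matrix units. Then there exists a diagonal matrix ã ∈ M_n(A) such that Δ agrees with ad(ã) on all diagonal matrices, and ad(ã) vanishes on the linear span of the matrix units. -/

import Mathlib

open Matrix

def IsDerivation {A : Type*} [Ring A] [Algebra ℂ A] (D : A → A) : Prop :=
  (∀ x y, D (x + y) = D x + D y) ∧ (∀ (c : ℂ) (x), D (c • x) = c • D x) ∧
  (∀ x y, D (x * y) = D x * y + x * D y)

def Is2LocalDerivation {A : Type*} [Ring A] [Algebra ℂ A] (Δ : A → A) : Prop :=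
  ∀ x y, ∃ D, IsDerivation D ∧ Δ x = D x ∧ Δ y = D y

def HasInnerDerivationProperty (A : Type*) [Ring A] [Algebra ℂ A] : Prop :=
  ∀ D : A → A, IsDerivation D → ∃ a : A, ∀ x, D x = a * x - x * a

/-- `Δ` vanishes on the linear span of the matrix units. -/
def VanishesOnUnits {A : Type*} [Ring A] [Algebra ℂ A] {n : ℕ}
    (Δ : Matrix (Fin n) (Fin n) A → Matrix (Fin n) (Fin n) A) : Prop :=
  ∀ x ∈ Submodule.span ℂ (Set.range fun p : Fin n × Fin n =>
      Matrix.single p.1 p.2 (1 : A)), Δ x = 0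
def IsSemiprime (A : Type*) [Ring A] : Prop :=
  ∀ a : A, (∀ x : A, a * x * a = 0) → a = 0


/-! Every derivation `D` of `Mₙ(A)` is inner: subtracting `ad a` with `a = ∑ₖ D(e_{kz}) e_{zk}`
leaves a derivation killing the matrix units, which therefore acts entrywise by a derivation of
`A`. Hence any two values of the 2-local derivation `Δ` are given by one inner derivation.
For diagonal `x`, pairing `x` with `diag(0, 1, …, n - 1)` (killed by `Δ`) gives an implementing
`ad m` with `m` diagonal, so `Δ x` is diagonal; pairing `x` with the cyclic permutation matrix gives
one whose `m` has constant diagonal `c`, so `(Δ x)_{ii} = c x_{ii} - x_{ii} c`. Pairing `x` with the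
scalar matrix `x_{ii}` shows that `(Δ x)_{ii} = δ (x_{ii})` for a single map `δ : A → A`. As
`n ≥ 3`, any three elements of `A` sit on one diagonal, so `δ` agrees with one inner derivation on
any three points and is a derivation; then `δ = ad c₀` and `ã = diag(c₀, …, c₀)`. -/

namespace IsDerivation

variable {B : Type*} [Ring B] [Algebra ℂ B] {D : B → B}

def toLinearMap (hD : IsDerivation D) : B →ₗ[ℂ] B where
  toFun := D
  map_add' := hD.1
  map_smul' := hD.2.1

lemma map_zero (hD : IsDerivation D) : D 0 = 0 :=
  _root_.map_zero hD.toLinearMap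

lemma map_sum (hD : IsDerivation D) {ι : Type*} (s : Finset ι) (f : ι → B) :
    D (∑ i ∈ s, f i) = ∑ i ∈ s, D (f i) :=
  _root_.map_sum hD.toLinearMap f s

lemma sub_inner (hD : IsDerivation D) (a : B) :
    IsDerivation fun x => D x - (a * x - x * a) := by
  obtain ⟨hadd, hsmul, hmul⟩ := hD
  refine ⟨fun x y => ?_, fun c x => ?_, fun x y => ?_⟩
  · simp only [hadd]; noncomm_ring
  · simp only [hsmul, mul_smul_comm, smul_mul_assoc, smul_sub]
  · simp only [hmul]; noncomm_ring

lemma map_mul_mul_of_map_eq_zero (hD : IsDerivation D) {p r : B} (hp : D p = 0) (hr : D r = 0)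
    (q : B) : D (p * q * r) = p * D q * r := by
  rw [hD.2.2, hD.2.2, hp, hr]; simp

lemma of_exists_inner_triple {δ : B → B}
    (h : ∀ b₁ b₂ b₃ : B, ∃ c, δ b₁ = c * b₁ - b₁ * c ∧ δ b₂ = c * b₂ - b₂ * c ∧
      δ b₃ = c * b₃ - b₃ * c) : IsDerivation δ := by
  refine ⟨fun x y => ?_, fun μ x => ?_, fun x y => ?_⟩
  · obtain ⟨c, hx, hy, hxy⟩ := h x y (x + y)
    rw [hx, hy, hxy]; noncomm_ring
  · obtain ⟨c, hx, hμx, -⟩ := h x (μ • x) x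
    rw [hx, hμx, mul_smul_comm, smul_mul_assoc, smul_sub]
  · obtain ⟨c, hx, hy, hxy⟩ := h x y (x * y)
    rw [hx, hy, hxy]; noncomm_ring

end IsDerivation

section TwoLocal

variable {R : Type*} [Ring R] [Algebra ℂ R] {Δ : R → R}

lemma Is2LocalDerivation.exists_inner_pair (hΔ : Is2LocalDerivation Δ)
    (hR : HasInnerDerivationProperty R) (x y : R) :
    ∃ m, Δ x = m * x - x * m ∧ Δ y = m * y - y * m := by
  obtain ⟨D, hD, hx, hy⟩ := hΔ x y
  obtain ⟨m, hm⟩ := hR D hD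
  exact ⟨m, hx.trans (hm x), hy.trans (hm y)⟩

lemma Is2LocalDerivation.exists_inner_commute (hΔ : Is2LocalDerivation Δ)
    (hR : HasInnerDerivationProperty R) (x : R) {y : R} (hy : Δ y = 0) :
    ∃ m, Δ x = m * x - x * m ∧ Commute m y := by
  obtain ⟨m, hx, hy'⟩ := hΔ.exists_inner_pair hR x y
  exact ⟨m, hx, sub_eq_zero.mp (hy'.symm.trans hy)⟩

end TwoLocal

namespace Matrix

variable {ι : Type*} [Fintype ι] [DecidableEq ι] {A : Type*} [Ring A]

lemma diagonal_const_mul_sub_mul_diagonal_const_apply (c : A) (x : Matrix ι ι A) (i j : ι) :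
    (diagonal (fun _ => c) * x - x * diagonal (fun _ => c) : Matrix ι ι A) i j =
      c * x i j - x i j * c := by
  simp [diagonal_mul, mul_diagonal]

lemma diag_apply_eq_of_commute_permMatrix (σ : Equiv.Perm ι) {m : Matrix ι ι A}
    (h : Commute m (σ.permMatrix A)) (i : ι) : m (σ i) (σ i) = m i i := by
  simpa [PEquiv.toMatrix_toPEquiv_mul, PEquiv.mul_toMatrix_toPEquiv] using
    (congrFun₂ h.eq i (σ i)).symm

lemma exists_diag_eq_of_commute_finRotate {n : ℕ} {m : Matrix (Fin n) (Fin n) A}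
    (h : Commute m ((finRotate n).permMatrix A)) : ∃ c, ∀ i, m i i = c := by
  cases n with
  | zero => exact ⟨0, fun i => i.elim0⟩
  | succ n =>
    refine ⟨m 0 0, fun i => ?_⟩
    induction i using Fin.induction with
    | zero => rfl
    | succ i ih =>
      rw [← Fin.coeSucc_eq_succ, ← finRotate_apply, diag_apply_eq_of_commute_permMatrix _ h, ih]

variable [Algebra ℂ A]

lemma map_algebraMap_mem_span_single (c : Matrix ι ι ℂ) :
    c.map (algebraMap ℂ A) ∈
      Submodule.span ℂ (Set.range fun p : ι × ι => single p.1 p.2 (1 : A)) := by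
  rw [matrix_eq_sum_single (c.map _)]
  refine Submodule.sum_mem _ fun i _ => Submodule.sum_mem _ fun j _ => ?_
  rw [map_apply, Algebra.algebraMap_eq_smul_one, ← smul_single]
  exact Submodule.smul_mem _ _ (Submodule.subset_span ⟨(i, j), rfl⟩)

lemma diagonal_const_mul_sub_mul_diagonal_const_eq_zero_of_mem_span (c : A) {y : Matrix ι ι A}
    (hy : y ∈ Submodule.span ℂ (Set.range fun p : ι × ι => single p.1 p.2 (1 : A))) :
    diagonal (fun _ => c) * y - y * diagonal (fun _ => c) = 0 := by
  have hspan : Submodule.span ℂ (Set.range fun p : ι × ι => single p.1 p.2 (1 : A)) ≤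
      LinearMap.ker (LinearMap.mulLeft ℂ (diagonal fun _ => c) -
        LinearMap.mulRight ℂ (diagonal fun _ => c)) := by
    rw [Submodule.span_le]
    rintro _ ⟨p, rfl⟩
    ext i j
    simp [single_apply]
  simpa using hspan hy

lemma isDiag_of_commute_diagonal_algebraMap {f : ι → ℂ} (hf : Function.Injective f)
    {m : Matrix ι ι A} (h : Commute m (diagonal fun i => algebraMap ℂ A (f i))) : m.IsDiag := by
  intro i j hij
  have hij' := congrFun₂ h.eq i j
  simp only [mul_diagonal, diagonal_mul, ← Algebra.commutes, ← Algebra.smul_def] at hij'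
  have h0 : (f j - f i) • m i j = 0 := by rw [sub_smul, hij', sub_self]
  exact (smul_eq_zero.mp h0).resolve_left (sub_ne_zero.mpr (hf.ne hij.symm))

end Matrix

section MatrixDerivation

variable {ι : Type*} [Fintype ι] [DecidableEq ι] {A : Type*} [Ring A] [Algebra ℂ A]

lemma IsDerivation.exists_inner_on_single_one [Nonempty ι] {D : Matrix ι ι A → Matrix ι ι A}
    (hD : IsDerivation D) :
    ∃ a, ∀ i j, D (single i j 1) = a * single i j 1 - single i j 1 * a := by
  obtain ⟨z⟩ := ‹Nonempty ι›
  refine ⟨∑ k, D (single k z 1) * single z k 1, fun i j => ?_⟩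
  have hleft : (∑ k, D (single k z 1) * single z k 1) * single i j 1 =
      D (single i z 1) * single z j 1 := by
    rw [Finset.sum_mul, Finset.sum_eq_single i]
    · simp [mul_assoc]
    · intro k _ hk; simp [mul_assoc, single_mul_single_of_ne _ _ _ _ hk]
    · simp
  have hright : single i j 1 * ∑ k, D (single k z 1) * single z k 1 =
      D (single i z 1) * single z j 1 - D (single i j 1) := by
    have hleib : ∀ k, single i j (1 : A) * D (single k z 1) =
        D (single i j 1 * single k z 1) - D (single i j 1) * single k z 1 := fun k => by
      rw [hD.2.2]; abel
    simp_rw [Finset.mul_sum, ← mul_assoc, hleib, sub_mul, Finset.sum_sub_distrib, mul_assoc,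
      ← Finset.mul_sum, single_mul_single_same, mul_one, sum_single_one, mul_one]
    rw [Finset.sum_eq_single j]
    · simp
    · intro k _ hk
      rw [single_mul_single_of_ne _ _ _ _ (Ne.symm hk), hD.map_zero, zero_mul]
    · simp
  rw [hleft, hright]; abel

lemma IsDerivation.exists_eq_map_of_map_single_one [Nonempty ι]
    {D : Matrix ι ι A → Matrix ι ι A} (hD : IsDerivation D) (h₀ : ∀ i j, D (single i j 1) = 0) :
    ∃ d : A → A, IsDerivation d ∧ ∀ x, D x = x.map d := by
  obtain ⟨z⟩ := ‹Nonempty ι›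
  set d : A → A := fun b => D (single z z b) z z
  have hsingle : ∀ i j b, D (single i j b) = single i j (d b) := fun i j b => by
    simpa using hD.map_mul_mul_of_map_eq_zero (h₀ i z) (h₀ z j) (single z z b)
  refine ⟨d, ⟨fun b b' => ?_, fun μ b => ?_, fun b b' => ?_⟩, fun x => ?_⟩
  · simp only [d, single_add, hD.1, Matrix.add_apply]
  · simp only [d, ← smul_single, hD.2.1, Matrix.smul_apply]
  · have h := hD.2.2 (single z z b) (single z z b')
    rw [single_mul_single_same, hsingle, hsingle, hsingle] at h
    simpa using congrFun₂ h z z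
  · conv_lhs => rw [matrix_eq_sum_single x]
    conv_rhs => rw [matrix_eq_sum_single (x.map d)]
    simp only [hD.map_sum, hsingle, map_apply]

theorem HasInnerDerivationProperty.matrix (hA : HasInnerDerivationProperty A) :
    HasInnerDerivationProperty (Matrix ι ι A) := by
  intro D hD
  cases isEmpty_or_nonempty ι
  · exact ⟨0, fun x => Subsingleton.elim _ _⟩
  obtain ⟨a, ha⟩ := hD.exists_inner_on_single_one
  obtain ⟨d, hd, hDd⟩ := (hD.sub_inner a).exists_eq_map_of_map_single_one
    fun i j => sub_eq_zero.mpr (ha i j)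
  obtain ⟨c, hc⟩ := hA d hd
  refine ⟨a + diagonal fun _ => c, fun x => ?_⟩
  have hmap : x.map d = diagonal (fun _ => c) * x - x * diagonal (fun _ => c) := by
    ext i j
    rw [diagonal_const_mul_sub_mul_diagonal_const_apply, map_apply, hc]
  rw [← sub_eq_zero, ← sub_eq_zero.mpr ((hDd x).trans hmap)]
  noncomm_ring

end MatrixDerivation

section TwoLocalOnDiagonal

variable {ι : Type*} [Fintype ι] [DecidableEq ι] {A : Type*} [Ring A] [Algebra ℂ A]
  {Δ : Matrix ι ι A → Matrix ι ι A}

lemma Is2LocalDerivation.map_diagonal_apply_self (hΔ : Is2LocalDerivation Δ)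
    (hinner : HasInnerDerivationProperty (Matrix ι ι A))
    (hdiag : ∀ d : ι → A, ∃ c, Δ (diagonal d) = diagonal fun i => c * d i - d i * c)
    (d : ι → A) (i z : ι) : Δ (diagonal d) i i = Δ (diagonal fun _ => d i) z z := by
  obtain ⟨m, hx, hy⟩ := hΔ.exists_inner_pair hinner (diagonal d) (diagonal fun _ => d i)
  obtain ⟨c, hc⟩ := hdiag fun _ => d i
  have hi := congrFun₂ hy i i
  rw [hc, diagonal_apply_eq] at hi ⊢
  simpa [hx, mul_diagonal, diagonal_mul] using hi.symm

lemma Is2LocalDerivation.isDerivation_map_diagonal_const_apply (hΔ : Is2LocalDerivation Δ)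
    (hinner : HasInnerDerivationProperty (Matrix ι ι A))
    (hdiag : ∀ d : ι → A, ∃ c, Δ (diagonal d) = diagonal fun i => c * d i - d i * c)
    {i₁ i₂ i₃ : ι} (h₁₂ : i₁ ≠ i₂) (h₁₃ : i₁ ≠ i₃) (h₂₃ : i₂ ≠ i₃) (z : ι) :
    IsDerivation fun b => Δ (diagonal fun _ => b) z z := by
  refine IsDerivation.of_exists_inner_triple fun b₁ b₂ b₃ => ?_
  obtain ⟨c, hc⟩ := hdiag fun i => if i = i₁ then b₁ else if i = i₂ then b₂ else b₃
  have key := fun i => (hΔ.map_diagonal_apply_self hinner hdiag _ i z).symm.trans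
    (congrFun₂ hc i i)
  refine ⟨c, ?_, ?_, ?_⟩
  · simpa using key i₁
  · simpa [h₁₂.symm] using key i₂
  · simpa [h₁₃.symm, h₂₃.symm] using key i₃

lemma Is2LocalDerivation.map_diagonal_eq_diagonal (hΔ : Is2LocalDerivation Δ)
    (hinner : HasInnerDerivationProperty (Matrix ι ι A))
    (hdiag : ∀ d : ι → A, ∃ c, Δ (diagonal d) = diagonal fun i => c * d i - d i * c)
    (z : ι) (d : ι → A) : Δ (diagonal d) = diagonal fun i => Δ (diagonal fun _ => d i) z z := by
  obtain ⟨c, hc⟩ := hdiag d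
  ext i j
  rcases eq_or_ne i j with rfl | hij
  · rw [hΔ.map_diagonal_apply_self hinner hdiag, diagonal_apply_eq]
  · rw [hc, diagonal_apply_ne _ hij, diagonal_apply_ne _ hij]

end TwoLocalOnDiagonal

lemma Is2LocalDerivation.exists_map_diagonal_eq {A : Type*} [Ring A] [Algebra ℂ A] {n : ℕ}
    {Δ : Matrix (Fin n) (Fin n) A → Matrix (Fin n) (Fin n) A} (hΔ : Is2LocalDerivation Δ)
    (hinner : HasInnerDerivationProperty (Matrix (Fin n) (Fin n) A)) (hvan : VanishesOnUnits Δ)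
    (d : Fin n → A) : ∃ c, Δ (diagonal d) = diagonal fun i => c * d i - d i * c := by
  obtain ⟨m, hm, hmv⟩ := hΔ.exists_inner_commute hinner (diagonal d)
    (hvan _ (map_algebraMap_mem_span_single (diagonal fun i : Fin n => ((i : ℕ) : ℂ))))
  obtain ⟨m', hm', hmw⟩ := hΔ.exists_inner_commute hinner (diagonal d)
    (hvan _ (map_algebraMap_mem_span_single ((finRotate n).permMatrix ℂ)))
  rw [diagonal_map (map_zero _)] at hmv
  rw [PEquiv.map_toMatrix] at hmw
  have hoff := isDiag_of_commute_diagonal_algebraMap (Nat.cast_injective.comp Fin.val_injective) hmv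
  obtain ⟨c, hc⟩ := exists_diag_eq_of_commute_finRotate hmw
  refine ⟨c, ext fun i j => ?_⟩
  rcases eq_or_ne i j with rfl | hij
  · simp [hm', mul_diagonal, diagonal_mul, hc]
  · simp [hm, mul_diagonal, diagonal_mul, hoff hij, hij]

theorem stmt10_general {A : Type*} [NormedRing A] [NormedAlgebra ℂ A]
    (hidp : HasInnerDerivationProperty A)
    {n : ℕ} (hn : 3 ≤ n)
    (Δ : Matrix (Fin n) (Fin n) A → Matrix (Fin n) (Fin n) A)
    (hΔ : Is2LocalDerivation Δ) (hvan : VanishesOnUnits Δ) :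
    ∃ a : Matrix (Fin n) (Fin n) A,
      (∀ i j : Fin n, i ≠ j → a i j = 0) ∧
      (∀ x : Matrix (Fin n) (Fin n) A,
        (∀ i j : Fin n, i ≠ j → x i j = 0) → Δ x = a * x - x * a) ∧
      (∀ z ∈ Submodule.span ℂ (Set.range fun p : Fin n × Fin n =>
          Matrix.single p.1 p.2 (1 : A)), a * z - z * a = 0) := by
  have hinner : HasInnerDerivationProperty (Matrix (Fin n) (Fin n) A) := hidp.matrix
  have hdiag := hΔ.exists_map_diagonal_eq hinner hvan
  let z : Fin n := ⟨0, by omega⟩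
  obtain ⟨c, hc⟩ := hidp _ <| hΔ.isDerivation_map_diagonal_const_apply hinner hdiag
    (i₁ := ⟨0, by omega⟩) (i₂ := ⟨1, by omega⟩) (i₃ := ⟨2, by omega⟩) (by simp) (by simp)
    (by simp) z
  refine ⟨diagonal fun _ => c, fun i j => diagonal_apply_ne _, fun x hx => ?_,
    fun y => diagonal_const_mul_sub_mul_diagonal_const_eq_zero_of_mem_span c⟩
  rw [← (show x.IsDiag from fun i j => hx i j).diagonal_diag,
    hΔ.map_diagonal_eq_diagonal hinner hdiag z]
  simp only [hc, diagonal_mul_diagonal, diagonal_sub]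

theorem stmt10 {A : Type*} [NormedRing A] [NormedAlgebra ℂ A] [CompleteSpace A]
    (hsp : IsSemiprime A) (hidp : HasInnerDerivationProperty A)
    {n : ℕ} (hn : 3 ≤ n)
    (Δ : Matrix (Fin n) (Fin n) A → Matrix (Fin n) (Fin n) A)
    (hΔ : Is2LocalDerivation Δ) (hvan : VanishesOnUnits Δ) :
    ∃ a : Matrix (Fin n) (Fin n) A,
      (∀ i j : Fin n, i ≠ j → a i j = 0) ∧
      (∀ x : Matrix (Fin n) (Fin n) A,
        (∀ i j : Fin n, i ≠ j → x i j = 0) → Δ x = a * x - x * a) ∧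
      (∀ z ∈ Submodule.span ℂ (Set.range fun p : Fin n × Fin n =>
          Matrix.single p.1 p.2 (1 : A)), a * z - z * a = 0) :=
  stmt10_general hidp hn Δ hΔ hvan
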